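/- Let n ≥ 4, 1 ≤ u ≤ n and m ≥ 1. Let a = (a_1,…,a_n) ∈ R_n^n with a_u = 0 be an R_n-linear combination of the row vectors σ_u²μ_{u,m}(σ_i e_j − σ_j e_i) for i,j ≠ u with i ≠ j, and σ_uσ_jμ_{i,m}(σ_i e_j − σ_j e_i) for i,j ≠ u with i ≠ j, where e_j denotes the j-th standard basis row vector. Then the matrix I_n + Σ_{v≠u} a_v E_{u,v}, which equals the identity except in the u-th row, lies in IA_n^m. -/

import Mathlib

noncomputable section

open Matrix

/-- The Laurent polynomial ring `ℤ[x₁^{±1},…,x_n^{±1}]`, realized as the group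
algebra of the free abelian group `ℤⁿ` over `ℤ`. -/
abbrev LaurentR (n : ℕ) : Type := AddMonoidAlgebra ℤ (Fin n →₀ ℤ)

/-- `x_i` as a unit of `LaurentR n`. -/
def Xu {n : ℕ} (i : Fin n) : (LaurentR n)ˣ where
  val := AddMonoidAlgebra.single (Finsupp.single i 1) 1
  inv := AddMonoidAlgebra.single (-Finsupp.single i 1) 1
  val_inv := by
    rw [AddMonoidAlgebra.single_mul_single]
    simp [AddMonoidAlgebra.one_def]
  inv_val := by
    rw [AddMonoidAlgebra.single_mul_single]
    simp [AddMonoidAlgebra.one_def]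

/-- `x_i` as an element of `LaurentR n`. -/
def Xv {n : ℕ} (i : Fin n) : LaurentR n := (Xu i : LaurentR n)

/-- `σ_i = x_i - 1`. -/
def sg {n : ℕ} (i : Fin n) : LaurentR n := Xv i - 1

/-- The vector `σ⃗`. -/
def sgVec (n : ℕ) : Fin n → LaurentR n := fun i => sg i

/-- `μ_{r,m} = 1 + x_r + ⋯ + x_r^{m-1}`. -/
def muv {n : ℕ} (r : Fin n) (m : ℕ) : LaurentR n := ∑ i ∈ Finset.range m, Xv r ^ i

/-- The augmentation ideal `𝔄_n = Σ σ_i R_n`. -/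
def augI (n : ℕ) : Ideal (LaurentR n) := Ideal.span (Set.range (sgVec n))

/-- The ideal `m·R_n`. -/
def OI (n m : ℕ) : Ideal (LaurentR n) := Ideal.span {(m : LaurentR n)}

/-- The ideal `H_{n,m} = Σ_r (x_r^m − 1)R_n + mR_n`. -/
def HI (n m : ℕ) : Ideal (LaurentR n) :=
  Ideal.span (Set.range (fun r : Fin n => Xv r ^ m - 1) ∪ {(m : LaurentR n)})

/-- `IA_n = {A ∈ GL_n(R_n) : A·σ⃗ = σ⃗}` as a subgroup of `GL_n(R_n)`. -/
def IAn (n : ℕ) : Subgroup (GL (Fin n) (LaurentR n)) where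
  carrier := {g | (g : Matrix (Fin n) (Fin n) (LaurentR n)) *ᵥ sgVec n = sgVec n}
  one_mem' := by simp
  mul_mem' := by
    intro a b ha hb
    simp only [Set.mem_setOf_eq, Units.val_mul] at *
    rw [← Matrix.mulVec_mulVec, hb, ha]
  inv_mem' := by
    intro a ha
    simp only [Set.mem_setOf_eq] at *
    have h : ((a⁻¹ : GL (Fin n) (LaurentR n)) : Matrix (Fin n) (Fin n) (LaurentR n)) *ᵥ
        ((a : Matrix (Fin n) (Fin n) (LaurentR n)) *ᵥ sgVec n) = sgVec n := by
      rw [Matrix.mulVec_mulVec, ← Units.val_mul, inv_mul_cancel, Units.val_one,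
        Matrix.one_mulVec]
    rw [ha] at h
    exact h

/-- The underlying matrix of an element of `IA_n`. -/
def matOf {n : ℕ} (g : IAn n) : Matrix (Fin n) (Fin n) (LaurentR n) :=
  ((g : GL (Fin n) (LaurentR n)) : Matrix (Fin n) (Fin n) (LaurentR n))

/-- The principal congruence subgroup `IG_{n,m}` (as a subset of `IA_n`). -/
def IGnm (n m : ℕ) : Set (IAn n) := {g | ∀ k l, (matOf g - 1) k l ∈ HI n m}

/-- `IA_n^m`: the subgroup of `IA_n` generated by all `m`-th powers. -/
def IApow (n m : ℕ) : Subgroup (IAn n) := Subgroup.closure (Set.range fun g : IAn n => g ^ m)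


/-- `ISL_{n−1,i}(H)` for `n = k+1`: elements `I + A` of `IA_n` whose `i`-th row of `A`
vanishes, all entries of the minor `A_{i,i}` lie in `σ_iR_n ∩ H`, and
`det(I_{n−1} + A_{i,i}) = 1`. -/
def ISL {k : ℕ} (i : Fin (k + 1)) (H : Ideal (LaurentR (k + 1))) : Set (IAn (k + 1)) :=
  {g | (∀ l, (matOf g - 1) i l = 0) ∧
    (∀ a b : Fin k, (matOf g - 1) (i.succAbove a) (i.succAbove b) ∈
      Ideal.span {sg i} ⊓ H) ∧
    ((matOf g).submatrix i.succAbove i.succAbove).det = 1}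

/-- `IGL_{n−1,i}` for `n = k+1`: elements `I + A` of `IA_n` whose `i`-th row of `A`
vanishes and all entries of the minor `A_{i,i}` lie in `σ_iR_n`. -/
def IGLset {k : ℕ} (i : Fin (k + 1)) : Set (IAn (k + 1)) :=
  {g | (∀ l, (matOf g - 1) i l = 0) ∧
    ∀ a b : Fin k, (matOf g - 1) (i.succAbove a) (i.succAbove b) ∈ Ideal.span {sg i}}

/-- The elementary matrix `I_d + r·E_{a,b}` (`a ≠ b`) as an element of `GL_d(A)`. -/
def elemGL {d : ℕ} {A : Type*} [CommRing A] (a b : Fin d) (hab : a ≠ b) (r : A) :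
    GL (Fin d) A where
  val := 1 + Matrix.single a b r
  inv := 1 - Matrix.single a b r
  val_inv := by
    have h2 : Matrix.single a b r * Matrix.single a b r = 0 :=
      Matrix.single_mul_single_of_ne (c := r) (d := r) (h := hab.symm) ..
    rw [mul_sub, mul_one, add_mul, one_mul, h2]
    abel
  inv_val := by
    have h2 : Matrix.single a b r * Matrix.single a b r = 0 :=
      Matrix.single_mul_single_of_ne (c := r) (d := r) (h := hab.symm) ..
    rw [sub_mul, one_mul, mul_add, mul_one, h2]
    abel

/-- `E_d(A)`: the subgroup generated by the elementary matrices. -/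
def Egrp (d : ℕ) (A : Type*) [CommRing A] : Subgroup (GL (Fin d) A) :=
  Subgroup.closure {g | ∃ (a b : Fin d) (hab : a ≠ b) (r : A), g = elemGL a b hab r}

/-- `E_d(A,H)`: the normal closure in `E_d(A)` of the elementary matrices with
parameter in the ideal `H`. -/
def EgrpRel (d : ℕ) (A : Type*) [CommRing A] (H : Ideal A) : Subgroup (GL (Fin d) A) :=
  Subgroup.closure {g | ∃ e ∈ Egrp d A, ∃ (a b : Fin d) (hab : a ≠ b), ∃ r ∈ H,
    g = e * elemGL a b hab r * e⁻¹}

/-- The generic column ideal used in the definitions of `J_{m,u,v}` and `J̃_{m,u,v}`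
(with 1-indexed `u ∈ {0,…,n}` and `v` a 0-indexed column, so "`v ≤ u`" reads
`v.val < u`).  `lead` is the leading factor (`𝔄̃_u` resp. `𝔄_n`). -/
def colIdeal (n m u : ℕ) (lead : Ideal (LaurentR n)) (v : Fin n) : Ideal (LaurentR n) :=
  lead * ((∑ r : Fin n, if r.val < u then augI n * Ideal.span {sg r * muv r m} else 0)
      + augI n * OI n m + OI n m ^ 2)
    + (if v.val < u then
        ∑ r : Fin n, if u ≤ r.val then Ideal.span {sg r ^ 3 * muv r m} else 0
      else
        (∑ r : Fin n, if u ≤ r.val ∧ r ≠ v then Ideal.span {sg r ^ 3 * muv r m} else 0)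
          + augI n * Ideal.span {sg v ^ 2 * muv v m})

/-- `𝔄̃_u = Σ_{r=u+1}^n σ_rR_n` (1-indexed `u`). -/
def augTil (n u : ℕ) : Ideal (LaurentR n) :=
  Ideal.span {x | ∃ r : Fin n, u ≤ r.val ∧ x = sg r}

/-- The ideal `J̃_{m,u,v}`. -/
def Jtil (n m u : ℕ) (v : Fin n) : Ideal (LaurentR n) := colIdeal n m u (augTil n u) v

/-- The ideal `J_{m,u,v}`. -/
def Jfull (n m u : ℕ) (v : Fin n) : Ideal (LaurentR n) := colIdeal n m u (augI n) v

/-- The determinant condition `det = ∏_r x_r^{s_r·m²}`. -/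
def detMon (n m : ℕ) (g : IAn n) : Prop :=
  ∃ s : Fin n → ℤ,
    (matOf g).det = ∏ r : Fin n, ((Xu r ^ (s r * (m : ℤ) ^ 2) : (LaurentR n)ˣ) : LaurentR n)

/-- The set `𝕁̃_{m,u}`. -/
def JmatTil (n m u : ℕ) : Set (IAn n) :=
  {g | (∀ k v, (matOf g - 1) k v ∈ Jtil n m u v) ∧ detMon n m g}

/-- The set `𝕁_{m,u}`. -/
def JmatFull (n m u : ℕ) : Set (IAn n) :=
  {g | (∀ k v, (matOf g - 1) k v ∈ Jfull n m u v) ∧ detMon n m g}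

/-- The ideal `J_m = Σ_r σ_r³μ_{r,m}R_n + 𝔄_n²·mR_n + 𝔄_n·m²R_n`. -/
def JmI (n m : ℕ) : Ideal (LaurentR n) :=
  Ideal.span (Set.range fun r : Fin n => sg r ^ 3 * muv r m)
    + augI n ^ 2 * OI n m + augI n * OI n (m ^ 2)

/-- The free metabelian group `Φ_n = F_n/F_n''`. -/
instance derivedSeries_normal' (G : Type*) [Group G] (n : ℕ) : (derivedSeries G n).Normal :=
  derivedSeries_normal _ _

def Phi (n : ℕ) : Type := FreeGroup (Fin n) ⧸ derivedSeries (FreeGroup (Fin n)) 2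

instance (n : ℕ) : Group (Phi n) :=
  inferInstanceAs (Group (FreeGroup (Fin n) ⧸ derivedSeries (FreeGroup (Fin n)) 2))

/-!
A matrix `I + x yᵀ` with `y ⬝ σ⃗ = 0` and `1 + y ⬝ x` a unit lies in `IA_n`; if `y ⬝ x = σ_i`, its
`m`-th power is `I + μ_{i,m} x yᵀ`. Comparing the `m`-th powers for the rows `y` and `y + v`
(with `x = e_p`, `y = σ_i e_p − σ_p e_i`, `v_p = 0`) puts `I + e_p (μ_{i,m} v)ᵀ` into `IA_n^m`,
which already covers the second family of rows.

For the first family, write the row as `σ_u βᵀ` with `β = σ_u μ_{u,m} w`. The matrix `I + σ⃗ βᵀ`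
is the commutator of `(x_u⁻¹ (I + σ⃗ e_uᵀ))^m ∈ IA_n^m` with `I + e_u (σ_u w)ᵀ`. Choosing an index
`b` outside `{u, i, j}` and splitting `σ⃗ = κ + σ_b e_b + σ_u e_u`
factors it as `(I + κ βᵀ)(I + σ_b e_b βᵀ)(I + σ_u e_u βᵀ)`. The first factor is the commutator of
`I + κ (σ_b e_u − σ_u e_b)ᵀ` with an element of `IA_n^m` of the previous kind and the second is of
the previous kind itself, so the last factor, which is the required matrix, lies in `IA_n^m` too.
-/

section RankOne

variable {ι R : Type*} [Fintype ι] [DecidableEq ι] [CommRing R]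

theorem one_add_vecMulVec_pow (a b : ι → R) (k : ℕ) :
    (1 + vecMulVec a b) ^ k = 1 + (∑ i ∈ Finset.range k, (1 + b ⬝ᵥ a) ^ i) • vecMulVec a b := by
  induction k with
  | zero => simp
  | succ k ih =>
    rw [pow_succ, ih, Finset.sum_range_succ]
    simp only [add_mul, mul_add, one_mul, mul_one, smul_mul, vecMulVec_mul_vecMulVec,
      vecMulVec_smul]
    match_scalars
    · ring
    · linear_combination geom_sum_mul (1 + b ⬝ᵥ a) k

theorem isUnit_one_add_vecMulVec {a b : ι → R} (h : IsUnit (1 + b ⬝ᵥ a)) :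
    IsUnit (1 + vecMulVec a b) := by
  rw [isUnit_iff_isUnit_det, vecMulVec_eq Unit, det_one_add_replicateCol_mul_replicateRow]
  exact h

theorem one_add_vecMulVec_mul_one_add_vecMulVec {a b c d : ι → R} (h : b ⬝ᵥ c = 0) :
    (1 + vecMulVec a b) * (1 + vecMulVec c d) = 1 + vecMulVec a b + vecMulVec c d := by
  rw [add_mul, one_mul, mul_add, mul_one, vecMulVec_mul_vecMulVec, h, zero_smul, vecMulVec_zero,
    add_zero]
  abel

theorem one_add_vecMulVec_mul_conj {a c α : ι → R} (hαa : α ⬝ᵥ a = 0) (hαc : α ⬝ᵥ c = 0)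
    (hcc : c ⬝ᵥ c = 1) :
    (1 + vecMulVec a α) * (1 + vecMulVec c α) * (1 + vecMulVec a c) =
      (1 + vecMulVec a c) * (1 + vecMulVec c α) := by
  simp only [mul_add, add_mul, one_mul, mul_one, vecMulVec_mul_vecMulVec, hαa, hαc, hcc,
    zero_smul, one_smul, vecMulVec_zero, add_zero]
  abel

theorem one_add_vecMulVec_mul_commutator {κ η e γ : ι → R} (hγκ : γ ⬝ᵥ κ = 0) (hγe : γ ⬝ᵥ e = 0) :
    (1 + vecMulVec κ (-(η ⬝ᵥ e) • γ)) * (1 + vecMulVec κ η) * (1 + vecMulVec e γ) =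
      (1 + vecMulVec e γ) * (1 + vecMulVec κ η) := by
  simp only [mul_add, add_mul, one_mul, mul_one, smul_mul_assoc, vecMulVec_mul_vecMulVec,
    vecMulVec_smul, hγκ, hγe, smul_zero, zero_smul, vecMulVec_zero, add_zero]
  module

end RankOne

section IA

variable {n m : ℕ}

theorem matOf_mul (g h : IAn n) : matOf (g * h) = matOf g * matOf h := rfl

theorem matOf_one : matOf (1 : IAn n) = 1 := rfl

theorem matOf_pow (g : IAn n) (k : ℕ) : matOf (g ^ k) = matOf g ^ k :=
  map_pow ((Units.coeHom _).comp (IAn n).subtype) g k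

theorem matOf_inv_mul (g : IAn n) : matOf g⁻¹ * matOf g = 1 := by
  rw [← matOf_mul, inv_mul_cancel, matOf_one]

theorem matOf_mul_inv (g : IAn n) : matOf g * matOf g⁻¹ = 1 := by
  rw [← matOf_mul, mul_inv_cancel, matOf_one]

def iaOfIsUnit (M : Matrix (Fin n) (Fin n) (LaurentR n)) (hM : IsUnit M)
    (hσ : M *ᵥ sgVec n = sgVec n) : IAn n :=
  ⟨hM.unit, hσ⟩

theorem matOf_iaOfIsUnit (M : Matrix (Fin n) (Fin n) (LaurentR n)) (hM : IsUnit M)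
    (hσ : M *ᵥ sgVec n = sgVec n) : matOf (iaOfIsUnit M hM hσ) = M := rfl

theorem one_add_sg (i : Fin n) : 1 + sg i = Xv i := add_sub_cancel 1 (Xv i)

theorem sgVec_apply (i : Fin n) : sgVec n i = sg i := rfl

theorem isUnit_one_add_sg (i : Fin n) : IsUnit (1 + sg i) := by
  rw [one_add_sg]
  exact (Xu i).isUnit

theorem one_add_vecMulVec_mulVec_sgVec (a : Fin n → LaurentR n) {b : Fin n → LaurentR n}
    (hb : b ⬝ᵥ sgVec n = 0) : (1 + vecMulVec a b) *ᵥ sgVec n = sgVec n := by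
  rw [add_mulVec, one_mulVec, vecMulVec_mulVec, hb, MulOpposite.op_zero, zero_smul, add_zero]

def rankOneIA (a b : Fin n → LaurentR n) (hb : b ⬝ᵥ sgVec n = 0) (ht : IsUnit (1 + b ⬝ᵥ a)) :
    IAn n :=
  iaOfIsUnit (1 + vecMulVec a b) (isUnit_one_add_vecMulVec ht)
    (one_add_vecMulVec_mulVec_sgVec a hb)

theorem matOf_rankOneIA (a b : Fin n → LaurentR n) (hb : b ⬝ᵥ sgVec n = 0)
    (ht : IsUnit (1 + b ⬝ᵥ a)) : matOf (rankOneIA a b hb ht) = 1 + vecMulVec a b := rfl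

theorem matOf_rankOneIA_pow {a b : Fin n → LaurentR n} {i : Fin n} (hb : b ⬝ᵥ sgVec n = 0)
    (ht : IsUnit (1 + b ⬝ᵥ a)) (hba : b ⬝ᵥ a = sg i) (k : ℕ) :
    matOf (rankOneIA a b hb ht ^ k) = 1 + muv i k • vecMulVec a b := by
  rw [matOf_pow, matOf_rankOneIA, one_add_vecMulVec_pow, hba, one_add_sg, muv]

def columnTwistIA (u : Fin n) : IAn n :=
  iaOfIsUnit ((↑(Xu u)⁻¹ : LaurentR n) • (1 + vecMulVec (sgVec n) (Pi.single u 1)))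
    (by
      rw [isUnit_iff_isUnit_det, det_smul]
      refine (((Xu u)⁻¹).isUnit.pow _).mul ?_
      rw [← isUnit_iff_isUnit_det]
      refine isUnit_one_add_vecMulVec ?_
      rw [single_dotProduct, one_mul, sgVec_apply]
      exact isUnit_one_add_sg u)
    (by
      rw [smul_mulVec, add_mulVec, one_mulVec, vecMulVec_mulVec, single_dotProduct, one_mul,
        sgVec_apply, op_smul_eq_smul,
        show sgVec n + sg u • sgVec n = Xv u • sgVec n by rw [← one_add_sg, add_smul, one_smul],
        smul_smul, Xv, Units.inv_mul, one_smul])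

theorem matOf_columnTwistIA_pow (u : Fin n) (k : ℕ) :
    matOf (columnTwistIA u ^ k) = (↑(Xu u)⁻¹ : LaurentR n) ^ k •
      (1 + muv u k • vecMulVec (sgVec n) (Pi.single u 1)) := by
  rw [matOf_pow, columnTwistIA, matOf_iaOfIsUnit, smul_pow, one_add_vecMulVec_pow,
    single_dotProduct, one_mul, sgVec_apply, one_add_sg, muv]

end IA

section IApow

variable {n m : ℕ}

instance IApow_normal (n m : ℕ) : (IApow n m).Normal := by
  suffices h : Set.range (fun g : IAn n => g ^ m) =
      Group.conjugatesOfSet (Set.range fun g : IAn n => g ^ m) by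
    rw [IApow, h]
    exact Subgroup.normalClosure_normal
  refine Set.Subset.antisymm Group.subset_conjugatesOfSet fun x hx => ?_
  simp_rw [Group.mem_conjugatesOfSet_iff, isConj_iff] at hx
  obtain ⟨_, ⟨g, rfl⟩, c, rfl⟩ := hx
  exact ⟨c * g * c⁻¹, conj_pow⟩

theorem pow_mem_IApow (g : IAn n) : g ^ m ∈ IApow n m := Subgroup.subset_closure ⟨g, rfl⟩

def IApowMat (n m : ℕ) : Submonoid (Matrix (Fin n) (Fin n) (LaurentR n)) :=
  (IApow n m).toSubmonoid.map ((Units.coeHom _).comp (IAn n).subtype)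

namespace IApowMat

theorem mem_iff {M : Matrix (Fin n) (Fin n) (LaurentR n)} :
    M ∈ IApowMat n m ↔ ∃ g ∈ IApow n m, matOf g = M :=
  Submonoid.mem_map

theorem matOf_mem {g : IAn n} (hg : g ∈ IApow n m) : matOf g ∈ IApowMat n m :=
  mem_iff.2 ⟨g, hg, rfl⟩

theorem mul_mem_cancel_left {X Y : Matrix (Fin n) (Fin n) (LaurentR n)}
    (hX : X ∈ IApowMat n m) : X * Y ∈ IApowMat n m ↔ Y ∈ IApowMat n m := by
  refine ⟨fun hXY => ?_, mul_mem hX⟩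
  obtain ⟨g, hg, rfl⟩ := mem_iff.1 hX
  obtain ⟨h, hh, hXY⟩ := mem_iff.1 hXY
  refine mem_iff.2 ⟨g⁻¹ * h, mul_mem (inv_mem hg) hh, ?_⟩
  rw [matOf_mul, hXY, ← Matrix.mul_assoc, matOf_inv_mul, Matrix.one_mul]

theorem mul_mem_cancel_right {X Y : Matrix (Fin n) (Fin n) (LaurentR n)}
    (hY : Y ∈ IApowMat n m) : X * Y ∈ IApowMat n m ↔ X ∈ IApowMat n m := by
  refine ⟨fun hXY => ?_, fun hX => mul_mem hX hY⟩
  obtain ⟨g, hg, rfl⟩ := mem_iff.1 hY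
  obtain ⟨h, hh, hXY⟩ := mem_iff.1 hXY
  refine mem_iff.2 ⟨h * g⁻¹, mul_mem hh (inv_mem hg), ?_⟩
  rw [matOf_mul, hXY, Matrix.mul_assoc, matOf_mul_inv, Matrix.mul_one]

/-- `X` is the matrix of the commutator `g h g⁻¹ h⁻¹`, which lies in the normal subgroup
`IA_n^m`. -/
theorem of_mul_mul_eq {X : Matrix (Fin n) (Fin n) (LaurentR n)} {g h : IAn n}
    (hg : g ∈ IApow n m) (hX : X * matOf h * matOf g = matOf g * matOf h) :
    X ∈ IApowMat n m := by
  refine mem_iff.2 ⟨g * (h * g⁻¹ * h⁻¹),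
    mul_mem hg ((IApow_normal n m).conj_mem _ (inv_mem hg) h), ?_⟩
  rw [← mul_assoc, ← mul_assoc, matOf_mul, matOf_mul, matOf_mul, ← hX, Matrix.mul_assoc _ (matOf g),
    matOf_mul_inv, Matrix.mul_one, Matrix.mul_assoc, matOf_mul_inv, Matrix.mul_one]

end IApowMat

end IApow

section Generators

variable {n m : ℕ}

theorem one_add_vecMulVec_single_muv_mem {p i : Fin n} (hip : i ≠ p) {v : Fin n → LaurentR n}
    (hvp : v p = 0) (hv : v ⬝ᵥ sgVec n = 0) :
    1 + vecMulVec (Pi.single p 1) (muv i m • v) ∈ IApowMat n m := by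
  set e : Fin n → LaurentR n := Pi.single p 1
  set ρ : Fin n → LaurentR n := Pi.single p (sg i) - Pi.single i (sg p)
  have hρe : ρ ⬝ᵥ e = sg i := by simp [ρ, e, hip]
  have hρσ : ρ ⬝ᵥ sgVec n = 0 := by simp [ρ, sgVec_apply, mul_comm]
  have hρve : (ρ + v) ⬝ᵥ e = sg i := by simp [ρ, e, hip, hvp]
  have hρvσ : (ρ + v) ⬝ᵥ sgVec n = 0 := by rw [add_dotProduct, hρσ, hv, add_zero]
  set g := rankOneIA e (ρ + v) hρvσ (hρve ▸ isUnit_one_add_sg i)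
  set g0 := rankOneIA e ρ hρσ (hρe ▸ isUnit_one_add_sg i)
  refine (IApowMat.mul_mem_cancel_right (IApowMat.matOf_mem (pow_mem_IApow g0))).1 ?_
  convert IApowMat.matOf_mem (pow_mem_IApow g) using 1
  rw [matOf_rankOneIA_pow _ _ hρe, matOf_rankOneIA_pow _ _ hρve]
  have hve : (muv i m • v) ⬝ᵥ e = 0 := by simp [e, hvp]
  rw [← vecMulVec_smul, ← vecMulVec_smul, one_add_vecMulVec_mul_one_add_vecMulVec hve, smul_add,
    vecMulVec_add, add_assoc, add_comm (vecMulVec e (muv i m • v))]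

theorem one_add_vecMulVec_sgVec_muv_mem {u : Fin n} {α : Fin n → LaurentR n} (hαu : α u = 0)
    (hα : α ⬝ᵥ sgVec n = 0) : 1 + vecMulVec (sgVec n) (muv u m • α) ∈ IApowMat n m := by
  have hαe : α ⬝ᵥ Pi.single u 1 = 0 := by simp [hαu]
  refine IApowMat.of_mul_mul_eq (pow_mem_IApow (columnTwistIA u))
    (h := rankOneIA (Pi.single u 1) α hα (by simp [hαe])) ?_
  rw [matOf_columnTwistIA_pow, matOf_rankOneIA, Matrix.mul_smul, Matrix.smul_mul,
    ← smul_vecMulVec, vecMulVec_smul, ← smul_vecMulVec,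
    one_add_vecMulVec_mul_conj (by rw [dotProduct_smul, hα, smul_zero]) hαe (by simp)]

theorem one_add_vecMulVec_single_sq_muv_mem {u b : Fin n} (hbu : b ≠ u) {w : Fin n → LaurentR n}
    (hwu : w u = 0) (hwb : w b = 0) (hw : w ⬝ᵥ sgVec n = 0) :
    1 + vecMulVec (Pi.single u 1) ((sg u ^ 2 * muv u m) • w) ∈ IApowMat n m := by
  set β := sg u • muv u m • w with hβ
  set κ := sgVec n - (sg b • Pi.single b 1 + sg u • Pi.single u 1)
  have hD : 1 + vecMulVec (sgVec n) β ∈ IApowMat n m := by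
    rw [hβ, smul_comm]
    exact one_add_vecMulVec_sgVec_muv_mem (by simp [hwu]) (by simp [hw])
  have hY : 1 + vecMulVec κ β ∈ IApowMat n m := by
    set η := sg b • Pi.single u 1 - sg u • Pi.single b 1
    have hηκ : η ⬝ᵥ κ = 0 := by
      simp [η, κ, dotProduct_sub, single_dotProduct, hbu, hbu.symm, sgVec_apply, mul_comm]
    have hησ : η ⬝ᵥ sgVec n = 0 := by
      simp [η, single_dotProduct, sgVec_apply, mul_comm]
    have hηe : -(η ⬝ᵥ Pi.single b 1) = sg u := by simp [η, hbu]
    obtain ⟨gB, hgB, hgBmat⟩ :=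
      IApowMat.mem_iff.1 (one_add_vecMulVec_single_muv_mem (m := m) hbu.symm hwb hw)
    refine IApowMat.of_mul_mul_eq hgB (h := rankOneIA κ η hησ (by simp [hηκ])) ?_
    rw [hgBmat, matOf_rankOneIA, hβ, ← hηe]
    exact one_add_vecMulVec_mul_commutator (by simp [κ, hw, hwu, hwb]) (by simp [hwb])
  have hZ : 1 + vecMulVec (sg b • Pi.single b 1) β ∈ IApowMat n m := by
    convert one_add_vecMulVec_single_muv_mem (m := m) hbu.symm (v := (sg b * sg u) • w)
      (by simp [hwb]) (by simp [hw]) using 2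
    rw [smul_vecMulVec, ← vecMulVec_smul]
    congr 1
    module
  have hT : vecMulVec (Pi.single u 1) ((sg u ^ 2 * muv u m) • w) =
      vecMulVec (sg u • Pi.single u 1) β := by
    rw [smul_vecMulVec, ← vecMulVec_smul]
    congr 1
    module
  have hβb : β ⬝ᵥ (sg b • Pi.single b 1) = 0 := by simp [β, hwb]
  have hβu : β ⬝ᵥ (sg u • Pi.single u 1) = 0 := by simp [β, hwu]
  refine (IApowMat.mul_mem_cancel_left (mul_mem hY hZ)).1 ?_
  rw [hT, one_add_vecMulVec_mul_one_add_vecMulVec hβb, add_assoc, ← add_vecMulVec,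
    one_add_vecMulVec_mul_one_add_vecMulVec hβu, add_assoc, ← add_vecMulVec, add_assoc,
    sub_add_cancel]
  exact hD

end Generators

section Rows

variable {n m : ℕ}

-- Quantifying over `r` makes this set closed under scaling, so that it is a submodule.
def IApowRows (u : Fin n) (m : ℕ) : Submodule (LaurentR n) (Fin n → LaurentR n) where
  carrier := {a | a u = 0 ∧ ∀ r : LaurentR n, 1 + vecMulVec (Pi.single u 1) (r • a) ∈ IApowMat n m}
  add_mem' := by
    rintro a b ⟨hau, ha⟩ ⟨hbu, hb⟩
    refine ⟨by simp [hau, hbu], fun r => ?_⟩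
    rw [smul_add, vecMulVec_add, ← add_assoc,
      ← one_add_vecMulVec_mul_one_add_vecMulVec (by simp [hau])]
    exact mul_mem (ha r) (hb r)
  zero_mem' := ⟨rfl, fun r => by simp [one_mem]⟩
  smul_mem' := by
    rintro c a ⟨hau, ha⟩
    exact ⟨by simp [hau], fun r => by rw [smul_smul]; exact ha (r * c)⟩

theorem single_sub_single_dotProduct_sgVec (i j : Fin n) :
    (Pi.single j (sg i) - Pi.single i (sg j)) ⬝ᵥ sgVec n = 0 := by
  simp [sub_dotProduct, single_dotProduct, sgVec_apply, mul_comm]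

theorem smul_sq_muv_mem_IApowRows (hn : 4 ≤ n) {u i j : Fin n} (hiu : i ≠ u) (hju : j ≠ u) :
    (sg u ^ 2 * muv u m) • (Pi.single j (sg i) - Pi.single i (sg j)) ∈ IApowRows u m := by
  obtain ⟨b, -, hb⟩ := Finset.exists_mem_notMem_of_card_lt_card (s := {u, i, j})
    (t := Finset.univ) (by grind [Finset.card_univ, Fintype.card_fin, Finset.card_le_three])
  simp only [Finset.mem_insert, Finset.mem_singleton, not_or] at hb
  refine ⟨by simp [hiu.symm, hju.symm], fun r => ?_⟩
  rw [smul_comm]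
  exact one_add_vecMulVec_single_sq_muv_mem hb.1 (by simp [hiu.symm, hju.symm])
    (by simp [hb.2.1, hb.2.2]) (by rw [smul_dotProduct, single_sub_single_dotProduct_sgVec,
      smul_zero])

theorem smul_muv_mem_IApowRows {u i j : Fin n} (hiu : i ≠ u) (hju : j ≠ u) :
    (sg u * sg j * muv i m) • (Pi.single j (sg i) - Pi.single i (sg j)) ∈ IApowRows u m := by
  refine ⟨by simp [hiu.symm, hju.symm], fun r => ?_⟩
  rw [smul_smul, show r * (sg u * sg j * muv i m) = muv i m * (r * sg u * sg j) by ring,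
    ← smul_smul]
  exact one_add_vecMulVec_single_muv_mem hiu (by simp [hiu.symm, hju.symm])
    (by rw [smul_dotProduct, single_sub_single_dotProduct_sgVec, smul_zero])

end Rows

theorem statement_12_general (n m : ℕ) (hn : 4 ≤ n) (u : Fin n)
    (a : Fin n → LaurentR n)
    (ha : a ∈ Submodule.span (LaurentR n)
      ({v : Fin n → LaurentR n | ∃ i j : Fin n, i ≠ u ∧ j ≠ u ∧ i ≠ j ∧
          v = (sg u ^ 2 * muv u m) • (Pi.single j (sg i) - Pi.single i (sg j))} ∪
       {v : Fin n → LaurentR n | ∃ i j : Fin n, i ≠ u ∧ j ≠ u ∧ i ≠ j ∧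
          v = (sg u * sg j * muv i m) • (Pi.single j (sg i) - Pi.single i (sg j))})) :
    ∃ g : IAn n, g ∈ IApow n m ∧
      matOf g = 1 + Matrix.of (fun p q : Fin n => if p = u then a q else 0) := by
  have hrow : a ∈ IApowRows u m := Submodule.span_le.2 (by
    rintro _ (⟨i, j, hiu, hju, -, rfl⟩ | ⟨i, j, hiu, hju, -, rfl⟩)
    · exact smul_sq_muv_mem_IApowRows hn hiu hju
    · exact smul_muv_mem_IApowRows hiu hju) ha
  obtain ⟨g, hg, hgM⟩ := IApowMat.mem_iff.1 (hrow.2 1)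
  refine ⟨g, hg, ?_⟩
  rw [hgM, one_smul]
  congr 1
  ext p q
  simp [vecMulVec_apply, Pi.single_apply]

/-- (Elementary elements of type 1, second family.)  For `n ≥ 4`, `u`,
`m ≥ 1`, if the row vector `a` (with `a_u = 0`) is an `R_n`-linear combination of the vectors
`σ_u²μ_{u,m}(σ_ie_j − σ_je_i)` and `σ_uσ_jμ_{i,m}(σ_ie_j − σ_je_i)` (`i,j ≠ u`, `i ≠ j`),
then the matrix equal to the identity except for the row `a` in the `u`-th row lies
in `IA_n^m`. -/
theorem statement_12 (n m : ℕ) (hn : 4 ≤ n) (hm : 1 ≤ m) (u : Fin n)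
    (a : Fin n → LaurentR n) (hau : a u = 0)
    (ha : a ∈ Submodule.span (LaurentR n)
      ({v : Fin n → LaurentR n | ∃ i j : Fin n, i ≠ u ∧ j ≠ u ∧ i ≠ j ∧
          v = (sg u ^ 2 * muv u m) • (Pi.single j (sg i) - Pi.single i (sg j))} ∪
       {v : Fin n → LaurentR n | ∃ i j : Fin n, i ≠ u ∧ j ≠ u ∧ i ≠ j ∧
          v = (sg u * sg j * muv i m) • (Pi.single j (sg i) - Pi.single i (sg j))})) :
    ∃ g : IAn n, g ∈ IApow n m ∧
      matOf g = 1 + Matrix.of (fun p q : Fin n => if p = u then a q else 0) :=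
  statement_12_general n m hn u a ha
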